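/- Let p, Y, V, W ∈ ℝ^{n+1}, let x₀ satisfy ⟨x₀,x₀⟩ = ε ∈ {−1,+1}, and assume c := ⟨p, x₀⟩ ≠ 0, ⟨V, p⟩ = 0, ⟨Y, p⟩ = 0, and ⟨W, p⟩ + ⟨V, Y⟩ = 0. Define φ̃_p(v) := (εv − ⟨v,x₀⟩x₀)/c and φ(p) := (εp − c·x₀)/c. Then ⟨ φ̃_p(W) − (⟨Y,x₀⟩/c)·φ̃_p(V) , φ̃_p(Y) − (⟨Y,x₀⟩/c)·φ(p) ⟩ = ⟨W, Y⟩ / c². -/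
import Mathlib


open scoped BigOperators

/-- The Minkowski bilinear form of signature `(n+1-p, p)` on `ℝ^(n+1)`. -/
noncomputable def mink (n p : ℕ) (x y : Fin (n + 1) → ℝ) : ℝ :=
  ∑ i : Fin (n + 1), (if (i : ℕ) < p then (-1 : ℝ) else 1) * x i * y i

/-- The fiber component of the infinitesimal Pogorelov map at a point `pt` with
`c = ⟨pt,x₀⟩`: `φ̃_pt(v) = (εv − ⟨v,x₀⟩x₀)/c`. -/
noncomputable def infPogo (n p : ℕ) (ε : ℝ) (x₀ pt v : Fin (n + 1) → ℝ) : Fin (n + 1) → ℝ :=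
  (mink n p pt x₀)⁻¹ • (ε • v - mink n p v x₀ • x₀)

/-- The projective map `φ(pt) = (ε·pt − ⟨pt,x₀⟩x₀)/⟨pt,x₀⟩`. -/
noncomputable def phiMap (n p : ℕ) (ε : ℝ) (x₀ pt : Fin (n + 1) → ℝ) : Fin (n + 1) → ℝ :=
  (mink n p pt x₀)⁻¹ • (ε • pt - mink n p pt x₀ • x₀)


private lemma mink_symm (n p : ℕ) (x y : Fin (n+1) → ℝ) : mink n p x y = mink n p y x := by
  unfold mink; apply Finset.sum_congr rfl; intros; ring

private lemma mink_sub_left (n p : ℕ) (x y z : Fin (n+1) → ℝ) :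
    mink n p (x - y) z = mink n p x z - mink n p y z := by
  unfold mink; rw [← Finset.sum_sub_distrib]; apply Finset.sum_congr rfl; intros
  simp only [Pi.sub_apply]; split <;> ring

private lemma mink_sub_right (n p : ℕ) (x y z : Fin (n+1) → ℝ) :
    mink n p x (y - z) = mink n p x y - mink n p x z := by
  rw [mink_symm, mink_sub_left, mink_symm n p y, mink_symm n p z]

private lemma mink_smul_left (n p : ℕ) (c : ℝ) (x y : Fin (n+1) → ℝ) :
    mink n p (c • x) y = c * mink n p x y := by
  unfold mink; rw [Finset.mul_sum]; apply Finset.sum_congr rfl; intros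
  simp only [Pi.smul_apply, smul_eq_mul]; split <;> ring

private lemma mink_smul_right (n p : ℕ) (c : ℝ) (x y : Fin (n+1) → ℝ) :
    mink n p x (c • y) = c * mink n p x y := by
  rw [mink_symm, mink_smul_left, mink_symm]

/-- Key identity in the second proof of the infinitesimal Pogorelov theorem: if
`c = ⟨pt,x₀⟩ ≠ 0`, `⟨V,pt⟩ = 0`, `⟨Y,pt⟩ = 0` and `⟨W,pt⟩ + ⟨V,Y⟩ = 0`, then
`⟨φ̃(W) − (⟨Y,x₀⟩/c)φ̃(V), φ̃(Y) − (⟨Y,x₀⟩/c)φ(pt)⟩ = ⟨W,Y⟩/c²`. -/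
theorem infinitesimal_pogorelov_key_identity
    (n p : ℕ) (hn : 1 ≤ n) (hp : p ≤ n + 1) (ε : ℝ) (hε : ε = 1 ∨ ε = -1)
    (x₀ pt Y V W : Fin (n + 1) → ℝ)
    (hx₀ : mink n p x₀ x₀ = ε)
    (hc : mink n p pt x₀ ≠ 0)
    (hV : mink n p V pt = 0) (hY : mink n p Y pt = 0)
    (hW : mink n p W pt + mink n p V Y = 0) :
    mink n p
        (infPogo n p ε x₀ pt W - (mink n p Y x₀ / mink n p pt x₀) • infPogo n p ε x₀ pt V)
        (infPogo n p ε x₀ pt Y - (mink n p Y x₀ / mink n p pt x₀) • phiMap n p ε x₀ pt)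
      = mink n p W Y / (mink n p pt x₀) ^ 2 := by
  have hε2 : ε * ε = 1 := by rcases hε with h | h <;> simp [h]
  have hWpt : mink n p W pt = - mink n p V Y := by linarith
  simp only [infPogo, phiMap]
  simp only [mink_sub_left, mink_sub_right, mink_smul_left, mink_smul_right, hx₀]
  rw [hV, hWpt, mink_symm n p x₀ Y, mink_symm n p x₀ pt]
  field_simp
  ring_nf
  rcases hε with h | h <;> subst h <;> ring
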